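/- arXiv:1109.2408 — 2 statements merged into one kernel-verified Lean document; each statement's English description precedes it below -/
import Mathlib

section
/- Each elementary imset generates an extreme ray of the cone generated by all elementary imsets: if u is elementary and u = ∑_v k_v·v with k_v ≥ 0 summing over all elementary imsets v, then k_v = 0 for all v ≠ u. -/
/-- `δ_A : P(N) → ℝ`. -/
def deltaImset {α : Type*} [DecidableEq α] (A : Finset α) : Finset α → ℝ :=
  fun S => if S = A then 1 else 0

/-- Semi-elementary imset `u_{⟨A,B|C⟩}` as a real vector. -/
def semiElemImset {α : Type*} [DecidableEq α] (A B C : Finset α) : Finset α → ℝ :=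
  deltaImset (A ∪ B ∪ C) + deltaImset C - deltaImset (A ∪ C) - deltaImset (B ∪ C)

/-- Index of an elementary imset: `⟨a,b|C⟩` with `a ≠ b`, `a ∉ C`, `b ∉ C`. -/
abbrev ElemIdx (α : Type*) [DecidableEq α] :=
  {t : α × α × Finset α // t.1 ≠ t.2.1 ∧ t.1 ∉ t.2.2 ∧ t.2.1 ∉ t.2.2}

/-- The elementary imset associated to an index. -/
def elemImset {α : Type*} [DecidableEq α] (t : ElemIdx α) : Finset α → ℝ :=
  semiElemImset {t.val.1} {t.val.2.1} t.val.2.2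

/-!
If a linear functional vanishes on `u = ∑ k_v v`, is nonnegative on every term `k_v v` and nonzero
on `v`, then `k_v = 0`. Two kinds of functionals do this for every `v ≠ u`. Pairing with the
indicator of `{S | c ∈ S ∧ d ∈ S}` takes the second difference of that indicator, which on
`u_{⟨a,b|C⟩}` is `1` if `{a,b} = {c,d}` and `0` otherwise; taking `{c,d}` to be the pair of `v`
kills every `v` whose pair differs from that of `u`. The rest are `v = u_{⟨a,b|D⟩}` with `D ≠ C`,
and evaluation at `D` is `[C' = D]` on every surviving `u_{⟨a,b|C'⟩}`, so it is `0` on `u`.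
-/

theorem coeff_eq_zero_of_map_sum_eq_zero {R ι V : Type*} [Semiring R] [PartialOrder R]
    [IsOrderedAddMonoid R] [NoZeroDivisors R] [Fintype ι] [AddCommMonoid V] [Module R V]
    (φ : V →ₗ[R] R) (v : ι → V) {k : ι → R} (hnn : ∀ i, 0 ≤ k i * φ (v i))
    (hzero : φ (∑ i, k i • v i) = 0) {i : ι} (hi : φ (v i) ≠ 0) : k i = 0 := by
  simp only [map_sum, map_smul, smul_eq_mul] at hzero
  have hki := (Finset.sum_eq_zero_iff_of_nonneg fun j _ => hnn j).mp hzero i (Finset.mem_univ i)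
  exact (mul_eq_zero.mp hki).resolve_right hi

section Imsets

variable {α : Type*} [DecidableEq α]

theorem deltaImset_eq_single (A : Finset α) : deltaImset A = Pi.single A 1 := by
  ext S
  simp [deltaImset, Pi.single_apply]

def ElemIdx.pair (t : ElemIdx α) : Sym2 α := s(t.val.1, t.val.2.1)

theorem ElemIdx.notMem_cond_of_mem_pair {t : ElemIdx α} {x : α} (hx : x ∈ t.pair) :
    x ∉ t.val.2.2 := by
  rcases Sym2.mem_iff.mp hx with rfl | rfl
  exacts [t.prop.2.1, t.prop.2.2]

theorem elemImset_congr {s t : ElemIdx α} (hpair : s.pair = t.pair)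
    (hC : s.val.2.2 = t.val.2.2) : elemImset s = elemImset t := by
  obtain ⟨⟨a, b, C⟩, hs⟩ := s
  obtain ⟨⟨a', b', C'⟩, ht⟩ := t
  simp only [ElemIdx.pair, Sym2.eq_iff] at hpair hC
  subst hC
  rcases hpair with ⟨rfl, rfl⟩ | ⟨rfl, rfl⟩
  · rfl
  · simp only [elemImset, semiElemImset, Finset.union_comm {b}]
    abel

theorem elemImset_apply_of_notMem (t : ElemIdx α) {S : Finset α} (ha : t.val.1 ∉ S)
    (hb : t.val.2.1 ∉ S) : elemImset t S = deltaImset t.val.2.2 S := by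
  have hne : ∀ A : Finset α, t.val.1 ∈ A ∨ t.val.2.1 ∈ A → deltaImset A S = 0 := by
    rintro A hA
    rw [deltaImset, if_neg]
    rintro rfl
    tauto
  simp only [elemImset, semiElemImset, Pi.add_apply, Pi.sub_apply]
  rw [hne ({t.val.1} ∪ {t.val.2.1} ∪ t.val.2.2) (by simp), hne ({t.val.1} ∪ t.val.2.2) (by simp),
    hne ({t.val.2.1} ∪ t.val.2.2) (by simp)]
  ring

variable [Fintype α]

def pairFunctional (c d : α) : (Finset α → ℝ) →ₗ[ℝ] ℝ :=
  Fintype.linearCombination ℝ fun S => if c ∈ S ∧ d ∈ S then 1 else 0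

theorem pairFunctional_elemImset {c d : α} (hcd : c ≠ d) (t : ElemIdx α) :
    pairFunctional c d (elemImset t) = if t.pair = s(c, d) then 1 else 0 := by
  obtain ⟨⟨a, b, C⟩, hab, haC, hbC⟩ := t
  simp only [elemImset, semiElemImset, map_add, map_sub, deltaImset_eq_single, pairFunctional,
    Fintype.linearCombination_apply_single, one_smul, Finset.mem_union, Finset.mem_singleton,
    ElemIdx.pair, Sym2.eq_iff]
  split_ifs <;> grind

section Coefficients

variable {t₀ : ElemIdx α} {k : ElemIdx α → ℝ}

theorem coeff_eq_zero_of_pair_ne (heq : elemImset t₀ = ∑ t, k t • elemImset t)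
    (hk : ∀ t, 0 ≤ k t) {t : ElemIdx α} (h : t.pair ≠ t₀.pair) :
    k t = 0 := by
  have hcd : t.val.1 ≠ t.val.2.1 := t.prop.1
  refine coeff_eq_zero_of_map_sum_eq_zero (pairFunctional t.val.1 t.val.2.1) elemImset
    (fun s => ?_) ?_ ?_
  · rw [pairFunctional_elemImset hcd]
    exact mul_nonneg (hk s) (by split_ifs <;> norm_num)
  · rw [← heq, pairFunctional_elemImset hcd]
    exact if_neg (Ne.symm h)
  · simp [pairFunctional_elemImset hcd, ElemIdx.pair]

theorem coeff_eq_zero_of_cond_ne (heq : elemImset t₀ = ∑ t, k t • elemImset t)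
    (hk : ∀ t, 0 ≤ k t) {t : ElemIdx α} (hpair : t.pair = t₀.pair)
    (hC : t.val.2.2 ≠ t₀.val.2.2) : k t = 0 := by
  have heval : ∀ s : ElemIdx α, s.pair = t.pair →
      elemImset s t.val.2.2 = deltaImset s.val.2.2 t.val.2.2 := fun s hs =>
    elemImset_apply_of_notMem s
      (ElemIdx.notMem_cond_of_mem_pair (hs ▸ Sym2.mem_mk_left _ _))
      (ElemIdx.notMem_cond_of_mem_pair (hs ▸ Sym2.mem_mk_right _ _))
  refine coeff_eq_zero_of_map_sum_eq_zero (LinearMap.proj (R := ℝ) (φ := fun _ => ℝ) t.val.2.2)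
    elemImset (fun s => ?_) ?_ ?_
  · by_cases hs : s.pair = t₀.pair
    · rw [LinearMap.proj_apply, heval s (hs.trans hpair.symm), deltaImset]
      exact mul_nonneg (hk s) (by split_ifs <;> norm_num)
    · rw [coeff_eq_zero_of_pair_ne heq hk hs, zero_mul]
  · rw [← heq, LinearMap.proj_apply, heval t₀ hpair.symm, deltaImset, if_neg hC]
  · rw [LinearMap.proj_apply, heval t rfl, deltaImset, if_pos rfl]
    exact one_ne_zero

end Coefficients

end Imsets

theorem elementary_imset_extreme_ray {α : Type*} [DecidableEq α] [Fintype α]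
    (t₀ : ElemIdx α) (k : ElemIdx α → ℝ) (hk : ∀ t, 0 ≤ k t)
    (heq : elemImset t₀ = ∑ t : ElemIdx α, k t • elemImset t) :
    ∀ t : ElemIdx α, elemImset t ≠ elemImset t₀ → k t = 0 := by
  intro t hne
  by_cases hpair : t.pair = t₀.pair
  · exact coeff_eq_zero_of_cond_ne heq hk hpair fun hC => hne (elemImset_congr hpair hC)
  · exact coeff_eq_zero_of_pair_ne heq hk hpair
end

section
/- In any relation α₁u₁ + α₂u₂ = β₁v₁ + ⋯ + β_m v_m with positive real coefficients among pairwise distinct elementary imsets (u₁ ≠ u₂, all v_j distinct and different from u₁,u₂), one has m = 2, α₁ = α₂ = β₁ = β₂, and the relation is a positive multiple of the semi-graphoid relation u_{⟨a,b₁|C⟩} + u_{⟨a,b₂|b₁C⟩} = u_{⟨a,b₂|C⟩} + u_{⟨a,b₁|b₂C⟩}. -/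
section Helpers
variable {α : Type*} [DecidableEq α]

/-- the pair `{a,b}` of an elementary imset index -/
def eiPair (t : ElemIdx α) : Finset α := {t.val.1, t.val.2.1}

/-- the top set `{a,b} ∪ C` -/
def eiTop (t : ElemIdx α) : Finset α := insert t.val.1 (insert t.val.2.1 t.val.2.2)

/-- interval indicator -/
def intv (P T K : Finset α) : ℝ := if P ⊆ K ∧ K ⊆ T then 1 else 0

lemma intv_nonneg (P T K : Finset α) : 0 ≤ intv P T K := by
  unfold intv; split <;> norm_num

lemma intv_le_one (P T K : Finset α) : intv P T K ≤ 1 := by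
  unfold intv; split <;> norm_num

lemma eiPair_card (t : ElemIdx α) : (eiPair t).card = 2 :=
  Finset.card_pair t.prop.1

lemma eiPair_subset_eiTop (t : ElemIdx α) : eiPair t ⊆ eiTop t := by
  intro x hx
  simp only [eiPair, Finset.mem_insert, Finset.mem_singleton] at hx
  simp only [eiTop, Finset.mem_insert]
  tauto

lemma eiC_eq (t : ElemIdx α) : eiTop t \ eiPair t = t.val.2.2 := by
  obtain ⟨⟨a, b, C⟩, hab, haC, hbC⟩ := t
  ext x
  simp only [eiTop, eiPair, Finset.mem_sdiff, Finset.mem_insert, Finset.mem_singleton]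
  constructor
  · rintro ⟨h1 | h1 | h1, h2⟩ <;> tauto
  · intro hx
    refine ⟨Or.inr (Or.inr hx), ?_⟩
    rintro (rfl | rfl) <;> [exact haC hx; exact hbC hx]

lemma semiElem_top (a b : α) (C : Finset α) :
    ({a} : Finset α) ∪ {b} ∪ C = insert a (insert b C) := by
  ext x; simp [or_assoc]

lemma semiElem_comm (a b : α) (C : Finset α) :
    semiElemImset {a} {b} C = semiElemImset {b} {a} C := by
  unfold semiElemImset
  rw [show ({a} : Finset α) ∪ {b} = {b} ∪ {a} from Finset.union_comm _ _]
  ring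

lemma elemImset_def (t : ElemIdx α) :
    elemImset t = semiElemImset {t.val.1} {t.val.2.1} t.val.2.2 := rfl

lemma elem_eq_semi (t : ElemIdx α) (a b : α) (C : Finset α)
    (hp : eiPair t = {a, b}) (ht : eiTop t = insert a (insert b C))
    (hab : a ≠ b) (haC : a ∉ C) (hbC : b ∉ C) :
    elemImset t = semiElemImset {a} {b} C := by
  have hCC : C = t.val.2.2 := by
    have h1 : eiTop t \ eiPair t = C := by
      rw [hp, ht]
      ext x
      simp only [Finset.mem_sdiff, Finset.mem_insert, Finset.mem_singleton]
      constructor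
      · rintro ⟨h1 | h1 | h1, h2⟩ <;> tauto
      · intro hx
        refine ⟨Or.inr (Or.inr hx), ?_⟩
        rintro (rfl | rfl) <;> [exact haC hx; exact hbC hx]
    rw [← h1, eiC_eq]
  obtain ⟨⟨a', b', C'⟩, hab', haC', hbC'⟩ := t
  simp only [eiPair] at hp
  subst hCC
  have ha' : a' = a ∨ a' = b := by
    have : a' ∈ ({a, b} : Finset α) := hp ▸ (by simp)
    simpa using this
  have hb' : b' = a ∨ b' = b := by
    have : b' ∈ ({a, b} : Finset α) := hp ▸ (by simp)
    simpa using this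
  rcases ha' with rfl | rfl <;> rcases hb' with rfl | rfl
  · exact absurd rfl hab'
  · rfl
  · exact (semiElem_comm _ _ _)
  · exact absurd rfl hab'

lemma elem_eq_elem (t t' : ElemIdx α) (hp : eiPair t = eiPair t')
    (ht : eiTop t = eiTop t') : elemImset t = elemImset t' := by
  obtain ⟨⟨a, b, C⟩, hab, haC, hbC⟩ := t'
  exact elem_eq_semi _ a b C hp ht hab haC hbC

end Helpers

section Helpers2
variable {α : Type*} [DecidableEq α] [Fintype α]

lemma zsum_delta (A K : Finset α) :
    ∑ S : Finset α, (if K ⊆ S then deltaImset A S else 0) = if K ⊆ A then (1:ℝ) else 0 := by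
  have : ∀ S : Finset α, (if K ⊆ S then deltaImset A S else 0)
      = if S = A then (if K ⊆ A then (1:ℝ) else 0) else 0 := by
    intro S
    unfold deltaImset
    by_cases h1 : S = A
    · subst h1; simp
    · simp [h1]
  rw [Finset.sum_congr rfl fun S _ => this S, Finset.sum_ite_eq' Finset.univ A]
  simp

lemma zsum (t : ElemIdx α) (K : Finset α) :
    ∑ S : Finset α, (if K ⊆ S then elemImset t S else 0) = intv (eiPair t) (eiTop t) K := by
  obtain ⟨⟨a, b, C⟩, hab, haC, hbC⟩ := t
  have expand : ∀ S : Finset α, (if K ⊆ S then elemImset ⟨(a,b,C), ⟨hab, haC, hbC⟩⟩ S else 0)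
      = (if K ⊆ S then deltaImset (insert a (insert b C)) S else 0)
        + (if K ⊆ S then deltaImset C S else 0)
        - (if K ⊆ S then deltaImset ({a} ∪ C) S else 0)
        - (if K ⊆ S then deltaImset ({b} ∪ C) S else 0) := by
    intro S
    by_cases h : K ⊆ S
    · simp only [h, if_true, elemImset, semiElemImset, semiElem_top a b C, Pi.sub_apply,
        Pi.add_apply]
    · simp [h]
  rw [Finset.sum_congr rfl fun S _ => expand S]
  rw [Finset.sum_sub_distrib, Finset.sum_sub_distrib, Finset.sum_add_distrib,
    zsum_delta, zsum_delta, zsum_delta, zsum_delta]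
  have hAC : ({a} : Finset α) ∪ C = insert a C := by ext x; simp
  have hBC : ({b} : Finset α) ∪ C = insert b C := by ext x; simp
  rw [hAC, hBC]
  unfold intv eiPair eiTop
  simp only
  by_cases ha : a ∈ K <;> by_cases hb : b ∈ K
  · have h1 : ¬ K ⊆ C := fun h => haC (h ha)
    have h2 : ¬ K ⊆ insert a C := fun h => by
      rcases Finset.mem_insert.mp (h hb) with h' | h'
      · exact hab h'.symm
      · exact hbC h'
    have h3 : ¬ K ⊆ insert b C := fun h => by
      rcases Finset.mem_insert.mp (h ha) with h' | h'
      · exact hab h'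
      · exact haC h'
    have h4 : ({a, b} : Finset α) ⊆ K := by
      intro x hx; rcases Finset.mem_insert.mp hx with rfl | hx
      · exact ha
      · rw [Finset.mem_singleton.mp hx]; exact hb
    simp [h1, h2, h3, h4]
  · have h1 : ¬ K ⊆ C := fun h => haC (h ha)
    have h3 : ¬ K ⊆ insert b C := fun h => by
      rcases Finset.mem_insert.mp (h ha) with h' | h'
      · exact hab h'
      · exact haC h'
    have h4 : ¬ ({a, b} : Finset α) ⊆ K := fun h => hb (h (by simp))
    have h5 : K ⊆ insert a (insert b C) ↔ K ⊆ insert a C := by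
      rw [Finset.insert_comm]
      exact Finset.subset_insert_iff_of_notMem hb
    by_cases h6 : K ⊆ insert a C <;> simp [h1, h3, h4, h5, h6]
  · have h1 : ¬ K ⊆ C := fun h => hbC (h hb)
    have h2 : ¬ K ⊆ insert a C := fun h => by
      rcases Finset.mem_insert.mp (h hb) with h' | h'
      · exact hab h'.symm
      · exact hbC h'
    have h4 : ¬ ({a, b} : Finset α) ⊆ K := fun h => ha (h (by simp))
    have h5 : K ⊆ insert a (insert b C) ↔ K ⊆ insert b C :=
      Finset.subset_insert_iff_of_notMem ha
    by_cases h6 : K ⊆ insert b C <;> simp [h1, h2, h4, h5, h6]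
  · have h4 : ¬ ({a, b} : Finset α) ⊆ K := fun h => ha (h (by simp))
    have h5 : K ⊆ insert a (insert b C) ↔ K ⊆ C := by
      rw [Finset.subset_insert_iff_of_notMem ha, Finset.subset_insert_iff_of_notMem hb]
    have h6 : K ⊆ insert a C ↔ K ⊆ C := Finset.subset_insert_iff_of_notMem ha
    have h7 : K ⊆ insert b C ↔ K ⊆ C := Finset.subset_insert_iff_of_notMem hb
    by_cases h8 : K ⊆ C <;> simp [h4, h5, h6, h7, h8]

end Helpers2

section Helpers3
variable {α : Type*} [DecidableEq α] [Fintype α]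

lemma zero_of_forall_sum (d : Finset α → ℝ) (P M : Finset α)
    (hd : ∀ T, d T ≠ 0 → P ⊆ T ∧ T ⊆ M)
    (h : ∀ K, P ⊆ K → K ⊆ M → ∑ T : Finset α, d T * (if K ⊆ T then 1 else 0) = 0) :
    ∀ T, d T = 0 := by
  by_contra hc
  push_neg at hc
  have hne : (Finset.univ.filter (fun T : Finset α => d T ≠ 0)).Nonempty := by
    obtain ⟨T, hT⟩ := hc
    exact ⟨T, by simpa using hT⟩
  obtain ⟨T, hTs, hmax⟩ :=
    Finset.exists_max_image (Finset.univ.filter (fun T : Finset α => d T ≠ 0)) Finset.card hne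
  have hdT : d T ≠ 0 := (Finset.mem_filter.mp hTs).2
  obtain ⟨hPT, hTM⟩ := hd T hdT
  have hsum := h T hPT hTM
  rw [Finset.sum_eq_single T ?off (by simp)] at hsum
  · rw [if_pos (Finset.Subset.refl T), mul_one] at hsum
    exact hdT hsum
  case off =>
    intro T' _ hne'
    by_cases hd' : d T' = 0
    · simp [hd']
    · by_cases hsub : T ⊆ T'
      · exfalso
        have h1 : T'.card ≤ T.card := hmax T' (by simpa using hd')
        have h2 : T.card < T'.card :=
          Finset.card_lt_card (Finset.ssubset_iff_subset_ne.mpr ⟨hsub, fun h => hne' h.symm⟩)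
        omega
      · simp [hsub]

lemma sum_coeff_single (A : Finset α) (c : ℝ) (g : Finset α → ℝ) :
    ∑ T : Finset α, (if T = A then c else 0) * g T = c * g A := by
  have : ∀ T : Finset α, (if T = A then c else 0) * g T
      = if T = A then c * g A else 0 := by
    intro T; by_cases h : T = A <;> simp [h]
  rw [Finset.sum_congr rfl fun T _ => this T, Finset.sum_ite_eq' Finset.univ A]
  simp

lemma sum_fiber_coeff {m : ℕ} (s : Finset (Fin m)) (g : Fin m → Finset α) (w : Fin m → ℝ)
    (F : Finset α → ℝ) :
    ∑ T : Finset α, (∑ j ∈ s.filter (fun j => g j = T), w j) * F T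
      = ∑ j ∈ s, w j * F (g j) := by
  rw [← Finset.sum_fiberwise s g (fun j => w j * F (g j))]
  refine Finset.sum_congr rfl fun T _ => ?_
  rw [Finset.sum_mul]
  exact Finset.sum_congr rfl fun j hj => by rw [(Finset.mem_filter.mp hj).2]

lemma forall_of_sum_ite {m : ℕ} (s : Finset (Fin m)) (w : Fin m → ℝ)
    (hw : ∀ j, 0 < w j) (p : Fin m → Prop) [DecidablePred p]
    (h : ∑ j ∈ s, w j * (if p j then 1 else 0) = ∑ j ∈ s, w j) :
    ∀ j ∈ s, p j := by
  have h0 : ∑ j ∈ s, (w j - w j * (if p j then 1 else 0)) = 0 := by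
    rw [Finset.sum_sub_distrib, h, sub_self]
  have hnn : ∀ j ∈ s, 0 ≤ w j - w j * (if p j then 1 else 0) := by
    intro j _
    by_cases hp : p j
    · simp [hp]
    · simp only [if_neg hp, mul_zero, sub_zero]
      exact le_of_lt (hw j)
  intro j hj
  have := (Finset.sum_eq_zero_iff_of_nonneg hnn).mp h0 j hj
  by_cases hp : p j
  · exact hp
  · exfalso; rw [if_neg hp, mul_zero, sub_zero] at this; exact (hw j).ne' this

lemma forall_not_of_sum_ite {m : ℕ} (s : Finset (Fin m)) (w : Fin m → ℝ)
    (hw : ∀ j, 0 < w j) (p : Fin m → Prop) [DecidablePred p]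
    (h : ∑ j ∈ s, w j * (if p j then 1 else 0) = 0) :
    ∀ j ∈ s, ¬ p j := by
  have hnn : ∀ j ∈ s, 0 ≤ w j * (if p j then 1 else 0) := by
    intro j _; by_cases hp : p j <;> simp [hp, le_of_lt (hw j)]
  intro j hj hp
  have := (Finset.sum_eq_zero_iff_of_nonneg hnn).mp h j hj
  rw [if_pos hp, mul_one] at this
  exact (hw j).ne' this

set_option linter.unusedSectionVars false in
lemma sdiff_singleton_cases {S T : Finset α} {x : α} (h : S \ {x} = T \ {x}) (hne : S ≠ T) :
    (x ∈ T → (x ∉ S ∧ S = T.erase x)) ∧ (x ∉ T → (x ∈ S ∧ S = insert x T)) := by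
  have key : ∀ y, y ≠ x → (y ∈ S ↔ y ∈ T) := by
    intro y hy
    constructor
    · intro hyS
      have : y ∈ S \ {x} := by simp [hyS, hy]
      rw [h] at this; exact (Finset.mem_sdiff.mp this).1
    · intro hyT
      have : y ∈ T \ {x} := by simp [hyT, hy]
      rw [← h] at this; exact (Finset.mem_sdiff.mp this).1
  have hxx : ¬ (x ∈ S ↔ x ∈ T) := by
    intro hiff
    apply hne
    ext y
    by_cases hy : y = x
    · subst hy; exact hiff
    · exact key y hy
  constructor
  · intro hxT
    have hxS : x ∉ S := fun hxS => hxx ⟨fun _ => hxT, fun _ => hxS⟩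
    refine ⟨hxS, ?_⟩
    ext y
    rw [Finset.mem_erase]
    by_cases hy : y = x
    · subst hy; simp [hxS]
    · rw [key y hy]; simp [hy]
  · intro hxT
    have hxS : x ∈ S := by
      by_contra hxS
      exact hxx ⟨fun h' => absurd h' hxS, fun h' => absurd h' hxT⟩
    refine ⟨hxS, ?_⟩
    ext y
    rw [Finset.mem_insert]
    by_cases hy : y = x
    · subst hy; simp [hxS]
    · rw [key y hy]; simp [hy]

end Helpers3

section Step4
variable {α : Type*} [DecidableEq α] [Fintype α]

set_option linter.unusedSectionVars false in
lemma pair_eq_of_subset {P Q : Finset α} (h : P ⊆ Q) (h1 : P.card = 2) (h2 : Q.card = 2) :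
    P = Q :=
  Finset.eq_of_subset_of_card_le h (by omega)

set_option linter.unusedSectionVars false in
lemma step4main {m : ℕ}
    (P₁ T₁ P₂ T₂ : Finset α) (Pv Tv : Fin m → Finset α)
    (α₁ α₂ : ℝ) (hα₁ : 0 < α₁) (β : Fin m → ℝ) (hβ : ∀ j, 0 < β j)
    (hPT1 : P₁ ⊆ T₁) (hPTv : ∀ j, Pv j ⊆ Tv j)
    (hc1 : P₁.card = 2) (hc2 : P₂.card = 2) (hne : P₁ ≠ P₂)
    (hPj : ∀ j, Pv j = P₁ ∨ Pv j = P₂)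
    (EQ : ∀ K, α₁ * intv P₁ T₁ K + α₂ * intv P₂ T₂ K = ∑ j, β j * intv (Pv j) (Tv j) K)
    (hA1 : α₁ = ∑ j ∈ Finset.univ.filter (fun j => Pv j = P₁), β j) :
    ∀ j, Pv j = P₁ → Tv j \ (P₂ \ P₁) = T₁ \ (P₂ \ P₁) := by
  classical
  set D := P₂ \ P₁ with hD
  have hDne : D.Nonempty := by
    rw [hD, Finset.sdiff_nonempty]
    intro hsub
    exact hne (pair_eq_of_subset hsub hc2 hc1).symm
  have hP1D : Disjoint P₁ D := Finset.disjoint_sdiff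
  set G₁ := Finset.univ.filter (fun j : Fin m => Pv j = P₁) with hG₁
  set d : Finset α → ℝ := fun T =>
    (if T = T₁ \ D then α₁ else 0) - ∑ j ∈ G₁.filter (fun j => Tv j \ D = T), β j with hd
  have hzero : ∀ T, d T = 0 := by
    apply zero_of_forall_sum d P₁ (Finset.univ \ D)
    · intro T hT
      by_contra hns
      apply hT
      rw [hd]
      simp only
      have e1 : T ≠ T₁ \ D := by
        rintro rfl
        exact hns ⟨Finset.subset_sdiff.mpr ⟨hPT1, hP1D⟩,
          Finset.sdiff_subset_sdiff (Finset.subset_univ _) (Finset.Subset.refl _)⟩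
      have e2 : G₁.filter (fun j => Tv j \ D = T) = ∅ := by
        rw [Finset.filter_eq_empty_iff]
        intro j hj hTj
        apply hns
        have hPvj : Pv j = P₁ := (Finset.mem_filter.mp hj).2
        rw [← hTj]
        exact ⟨Finset.subset_sdiff.mpr ⟨hPvj ▸ hPTv j, hP1D⟩,
          Finset.sdiff_subset_sdiff (Finset.subset_univ _) (Finset.Subset.refl _)⟩
      rw [if_neg e1, e2, Finset.sum_empty, sub_zero]
    · intro K hPK hKM
      have hKD : Disjoint K D := (Finset.subset_sdiff.mp hKM).2
      have hsplit : ∀ T : Finset α, d T * (if K ⊆ T then 1 else 0)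
          = (if T = T₁ \ D then α₁ else 0) * (if K ⊆ T then 1 else 0)
            - (∑ j ∈ G₁.filter (fun j => Tv j \ D = T), β j) * (if K ⊆ T then 1 else 0) := by
        intro T; rw [hd]; ring
      rw [Finset.sum_congr rfl fun T _ => hsplit T, Finset.sum_sub_distrib,
        sum_coeff_single, sum_fiber_coeff]
      -- now: α₁ * [K ⊆ T₁ \ D] - ∑_{j ∈ G₁} β j * [K ⊆ Tv j \ D] = 0
      have hsub_iff : ∀ T : Finset α, (K ⊆ T \ D) ↔ K ⊆ T := by
        intro T
        rw [Finset.subset_sdiff]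
        exact ⟨fun h => h.1, fun h => ⟨h, hKD⟩⟩
      have key1 : intv P₁ T₁ K = (if K ⊆ T₁ \ D then 1 else 0) := by
        unfold intv
        simp [hPK, hsub_iff T₁]
      have key2 : intv P₂ T₂ K = 0 := by
        unfold intv
        rw [if_neg]
        rintro ⟨hP2K, -⟩
        obtain ⟨x, hx⟩ := hDne
        have hxK : x ∈ K := hP2K (Finset.mem_sdiff.mp hx).1
        exact (Finset.disjoint_left.mp hKD) hxK hx
      have keyj : ∀ j, β j * intv (Pv j) (Tv j) K
          = if j ∈ G₁ then β j * (if K ⊆ Tv j \ D then 1 else 0) else 0 := by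
        intro j
        rcases hPj j with h | h
        · have hjG : j ∈ G₁ := by rw [hG₁]; simp [h]
          rw [if_pos hjG]
          unfold intv
          simp [h, hPK, hsub_iff (Tv j)]
        · by_cases hjG : j ∈ G₁
          · exfalso
            have : Pv j = P₁ := (Finset.mem_filter.mp hjG).2
            exact hne (this.symm.trans h)
          · rw [if_neg hjG]
            unfold intv
            rw [if_neg, mul_zero]
            rintro ⟨hP2K, -⟩
            rw [h] at hP2K
            obtain ⟨x, hx⟩ := hDne
            have hxK : x ∈ K := hP2K (Finset.mem_sdiff.mp hx).1
            exact (Finset.disjoint_left.mp hKD) hxK hx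
      have hEQ := EQ K
      rw [key1, key2, mul_zero, add_zero] at hEQ
      rw [Finset.sum_congr rfl fun j _ => keyj j, Finset.sum_ite_mem,
        Finset.univ_inter] at hEQ
      rw [← hEQ]
      ring
  have hfin := hzero (T₁ \ D)
  have hfin' : α₁ = ∑ j ∈ G₁.filter (fun j => Tv j \ D = T₁ \ D), β j := by
    have h0 : (if (T₁ \ D) = (T₁ \ D) then α₁ else 0)
        - ∑ j ∈ G₁.filter (fun j => Tv j \ D = T₁ \ D), β j = 0 := hfin
    rw [if_pos rfl, sub_eq_zero] at h0
    exact h0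
  -- α₁ = ∑ over G₁ with Tv j \ D = T₁ \ D; combined with hA1 get all
  have hsum_eq : ∑ j ∈ G₁, β j * (if Tv j \ D = T₁ \ D then 1 else 0) = ∑ j ∈ G₁, β j := by
    have hcong : ∀ j ∈ G₁, β j * (if Tv j \ D = T₁ \ D then 1 else 0)
        = if Tv j \ D = T₁ \ D then β j else 0 := by
      intro j _
      by_cases h : Tv j \ D = T₁ \ D <;> simp [h]
    rw [Finset.sum_congr rfl hcong, ← Finset.sum_filter, ← hfin', hA1]
  intro j hj
  exact forall_of_sum_ite G₁ β hβ _ hsum_eq j (by rw [hG₁]; simp [hj])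

end Step4

set_option maxHeartbeats 4000000 in
/-- Any `2` by `m` relation among distinct elementary imsets with positive coefficients
is a positive multiple of the semi-graphoid two-by-two relation. -/
theorem two_by_m_relation {α : Type*} [DecidableEq α] [Fintype α]
    (t₁ t₂ : ElemIdx α) (hu : elemImset t₁ ≠ elemImset t₂)
    (m : ℕ) (v : Fin m → ElemIdx α)
    (hvdist : ∀ i j : Fin m, i ≠ j → elemImset (v i) ≠ elemImset (v j))
    (hvu : ∀ j : Fin m, elemImset (v j) ≠ elemImset t₁ ∧ elemImset (v j) ≠ elemImset t₂)
    (α₁ α₂ : ℝ) (hα₁ : 0 < α₁) (hα₂ : 0 < α₂)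
    (β : Fin m → ℝ) (hβ : ∀ j, 0 < β j)
    (heq : α₁ • elemImset t₁ + α₂ • elemImset t₂ = ∑ j : Fin m, β j • elemImset (v j)) :
    m = 2 ∧ α₁ = α₂ ∧ (∀ j : Fin m, β j = α₁) ∧
    ∃ (a b₁ b₂ : α) (C : Finset α),
      a ≠ b₁ ∧ a ≠ b₂ ∧ b₁ ≠ b₂ ∧ a ∉ C ∧ b₁ ∉ C ∧ b₂ ∉ C ∧
      ({elemImset t₁, elemImset t₂} : Set (Finset α → ℝ)) =
        {semiElemImset {a} {b₁} C, semiElemImset {a} {b₂} (insert b₁ C)} ∧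
      Set.range (fun j : Fin m => elemImset (v j)) =
        {semiElemImset {a} {b₂} C, semiElemImset {a} {b₁} (insert b₂ C)} := by
  classical
  set P₁ := eiPair t₁ with hP₁def
  set T₁ := eiTop t₁ with hT₁def
  set P₂ := eiPair t₂ with hP₂def
  set T₂ := eiTop t₂ with hT₂def
  set Pv := fun j => eiPair (v j) with hPvdef
  set Tv := fun j => eiTop (v j) with hTvdef
  have EQ : ∀ K : Finset α,
      α₁ * intv P₁ T₁ K + α₂ * intv P₂ T₂ K = ∑ j, β j * intv (Pv j) (Tv j) K := by
    intro K
    have hL : ∑ S : Finset α, (if K ⊆ S then (α₁ • elemImset t₁ + α₂ • elemImset t₂) S else 0)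
        = α₁ * intv P₁ T₁ K + α₂ * intv P₂ T₂ K := by
      have hpt : ∀ S : Finset α, (if K ⊆ S then (α₁ • elemImset t₁ + α₂ • elemImset t₂) S else 0)
          = α₁ * (if K ⊆ S then elemImset t₁ S else 0)
            + α₂ * (if K ⊆ S then elemImset t₂ S else 0) := by
        intro S; by_cases h : K ⊆ S <;> simp [h]
      rw [Finset.sum_congr rfl fun S _ => hpt S, Finset.sum_add_distrib, ← Finset.mul_sum,
        ← Finset.mul_sum, zsum, zsum]
    have hR : ∑ S : Finset α, (if K ⊆ S then (∑ j, β j • elemImset (v j)) S else 0)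
        = ∑ j, β j * intv (Pv j) (Tv j) K := by
      have hpt : ∀ S : Finset α, (if K ⊆ S then (∑ j, β j • elemImset (v j)) S else 0)
          = ∑ j, β j * (if K ⊆ S then elemImset (v j) S else 0) := by
        intro S
        by_cases h : K ⊆ S <;> simp [h, Finset.sum_apply]
      rw [Finset.sum_congr rfl fun S _ => hpt S, Finset.sum_comm]
      exact Finset.sum_congr rfl fun j _ => by rw [← Finset.mul_sum, zsum]
    rw [← hL, ← hR]
    exact Finset.sum_congr rfl fun S _ => by rw [heq]
  have hPT1 : P₁ ⊆ T₁ := eiPair_subset_eiTop t₁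
  have hPT2 : P₂ ⊆ T₂ := eiPair_subset_eiTop t₂
  have hPTv : ∀ j, Pv j ⊆ Tv j := fun j => eiPair_subset_eiTop (v j)
  have hc1 : P₁.card = 2 := eiPair_card t₁
  have hc2 : P₂.card = 2 := eiPair_card t₂
  have hcv : ∀ j, (Pv j).card = 2 := fun j => eiPair_card (v j)
  have hPvdef' : ∀ j, eiPair (v j) = Pv j := fun j => by rw [hPvdef]
  have hTvdef' : ∀ j, eiTop (v j) = Tv j := fun j => by rw [hTvdef]
  clear_value P₁ T₁ P₂ T₂ Pv Tv
  have hne12 : ¬ (P₁ = P₂ ∧ T₁ = T₂) := fun ⟨h1, h2⟩ => hu (elem_eq_elem _ _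
    (by rw [← hP₁def, ← hP₂def]; exact h1) (by rw [← hT₁def, ← hT₂def]; exact h2))
  have hnej1 : ∀ j, ¬ (Pv j = P₁ ∧ Tv j = T₁) :=
    fun j ⟨h1, h2⟩ => (hvu j).1 (elem_eq_elem _ _
      (by rw [hPvdef' j, ← hP₁def]; exact h1) (by rw [hTvdef' j, ← hT₁def]; exact h2))
  have hnej2 : ∀ j, ¬ (Pv j = P₂ ∧ Tv j = T₂) :=
    fun j ⟨h1, h2⟩ => (hvu j).2 (elem_eq_elem _ _
      (by rw [hPvdef' j, ← hP₂def]; exact h1) (by rw [hTvdef' j, ← hT₂def]; exact h2))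
  have hnejj : ∀ i j, i ≠ j → ¬ (Pv i = Pv j ∧ Tv i = Tv j) :=
    fun i j hij ⟨h1, h2⟩ => hvdist i j hij (elem_eq_elem _ _
      (by rw [hPvdef' i, hPvdef' j]; exact h1) (by rw [hTvdef' i, hTvdef' j]; exact h2))
  -- Step 1 : every pair on the RHS is P₁ or P₂
  have hPj : ∀ j, Pv j = P₁ ∨ Pv j = P₂ := by
    intro j
    have h := EQ (Pv j)
    have h1 : intv (Pv j) (Tv j) (Pv j) = 1 := by
      unfold intv; rw [if_pos ⟨Finset.Subset.refl _, hPTv j⟩]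
    have hle : β j * intv (Pv j) (Tv j) (Pv j) ≤ ∑ j', β j' * intv (Pv j') (Tv j') (Pv j) :=
      Finset.single_le_sum (f := fun j' => β j' * intv (Pv j') (Tv j') (Pv j))
        (fun i _ => mul_nonneg (hβ i).le (intv_nonneg _ _ _)) (Finset.mem_univ j)
    rw [h1, mul_one] at hle
    by_contra hcon
    push_neg at hcon
    have i1 : intv P₁ T₁ (Pv j) = 0 := by
      unfold intv; rw [if_neg]; rintro ⟨hsub, -⟩
      exact hcon.1 (pair_eq_of_subset hsub hc1 (hcv j)).symm
    have i2 : intv P₂ T₂ (Pv j) = 0 := by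
      unfold intv; rw [if_neg]; rintro ⟨hsub, -⟩
      exact hcon.2 (pair_eq_of_subset hsub hc2 (hcv j)).symm
    rw [i1, i2] at h
    have := hβ j
    linarith
  -- Step 2 : P₁ ≠ P₂
  have hP12 : P₁ ≠ P₂ := by
    intro hPP
    have hall : ∀ j, Pv j = P₁ := fun j => (hPj j).elim id (fun h => h.trans hPP.symm)
    set d : Finset α → ℝ := fun T =>
      (if T = T₁ then α₁ else 0) + (if T = T₂ then α₂ else 0)
        - ∑ j ∈ Finset.univ.filter (fun j => Tv j = T), β j with hd
    have hzero : ∀ T, d T = 0 := by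
      apply zero_of_forall_sum d P₁ Finset.univ
      · intro T hT
        refine ⟨?_, Finset.subset_univ _⟩
        by_contra hns
        apply hT
        rw [hd]
        have e1 : T ≠ T₁ := fun h => hns (h ▸ hPT1)
        have e2 : T ≠ T₂ := fun h => hns (h ▸ (hPP ▸ hPT2))
        have e3 : Finset.univ.filter (fun j => Tv j = T) = ∅ := by
          rw [Finset.filter_eq_empty_iff]
          intro j _ hTj
          exact hns (hTj ▸ ((hall j) ▸ hPTv j))
        simp only [if_neg e1, if_neg e2, e3, Finset.sum_empty, add_zero, sub_zero]
      · intro K hPK _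
        have hsplit : ∀ T : Finset α, d T * (if K ⊆ T then 1 else 0)
            = (if T = T₁ then α₁ else 0) * (if K ⊆ T then 1 else 0)
              + (if T = T₂ then α₂ else 0) * (if K ⊆ T then 1 else 0)
              - (∑ j ∈ Finset.univ.filter (fun j => Tv j = T), β j)
                  * (if K ⊆ T then 1 else 0) := by
          intro T; rw [hd]; ring
        rw [Finset.sum_congr rfl fun T _ => hsplit T, Finset.sum_sub_distrib,
          Finset.sum_add_distrib, sum_coeff_single, sum_coeff_single, sum_fiber_coeff]
        have key1 : intv P₁ T₁ K = (if K ⊆ T₁ then 1 else 0) := by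
          unfold intv; simp [hPK]
        have key2 : intv P₂ T₂ K = (if K ⊆ T₂ then 1 else 0) := by
          unfold intv; simp [hPP ▸ hPK]
        have keyj : ∀ j, intv (Pv j) (Tv j) K = (if K ⊆ Tv j then 1 else 0) := by
          intro j; unfold intv; simp [(hall j) ▸ hPK]
        have hEQ := EQ K
        rw [key1, key2] at hEQ
        rw [Finset.sum_congr rfl fun j _ => by rw [keyj j]] at hEQ
        linarith
    have hfin := hzero T₁
    rw [hd] at hfin
    have e2 : T₁ ≠ T₂ := fun h => hne12 ⟨hPP, h⟩
    have e3 : Finset.univ.filter (fun j => Tv j = T₁) = ∅ := by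
      rw [Finset.filter_eq_empty_iff]
      intro j _ hTj
      exact hnej1 j ⟨hall j, hTj⟩
    simp only [if_pos rfl, if_neg e2, e3, Finset.sum_empty, add_zero, sub_zero] at hfin
    exact hα₁.ne' hfin
  -- groups
  set G₁ := Finset.univ.filter (fun j : Fin m => Pv j = P₁) with hG₁
  set G₂ := Finset.univ.filter (fun j : Fin m => Pv j = P₂) with hG₂
  -- Step 3 : α₁ = ∑ G₁ β, α₂ = ∑ G₂ β
  have hgrp : ∀ (P T : Finset α), P.card = 2 → P ⊆ T →
      (∀ j, Pv j = P ∨ (¬ P ⊆ Pv j ∧ ¬ Pv j ⊆ P)) →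
      (α₁ * intv P₁ T₁ P + α₂ * intv P₂ T₂ P
        = ∑ j ∈ Finset.univ.filter (fun j => Pv j = P), β j) := by
    intro P T hcP hPT hj
    have h := EQ P
    have keyj : ∀ j, β j * intv (Pv j) (Tv j) P
        = if j ∈ Finset.univ.filter (fun j => Pv j = P) then β j else 0 := by
      intro j
      rcases hj j with hh | hh
      · have : intv (Pv j) (Tv j) P = 1 := by
          unfold intv
          rw [if_pos ⟨by rw [hh], by rw [← hh]; exact hPTv j⟩]
        rw [this, mul_one,
          if_pos (by simp only [Finset.mem_filter, Finset.mem_univ, true_and]; exact hh)]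
      · have : intv (Pv j) (Tv j) P = 0 := by
          unfold intv
          rw [if_neg]
          rintro ⟨h1, -⟩
          exact hh.1 (by
            have := pair_eq_of_subset h1 (hcv j) hcP
            rw [this])
        have hmem : j ∉ Finset.univ.filter (fun j => Pv j = P) := by
          simp only [Finset.mem_filter, Finset.mem_univ, true_and]
          intro hP; exact hh.1 (hP ▸ Finset.Subset.refl P)
        simp [this, hmem]
    rw [Finset.sum_congr rfl fun j _ => keyj j, Finset.sum_ite_mem, Finset.univ_inter] at h
    exact h
  have hA1 : α₁ = ∑ j ∈ G₁, β j := by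
    have hj : ∀ j, Pv j = P₁ ∨ (¬ P₁ ⊆ Pv j ∧ ¬ Pv j ⊆ P₁) := by
      intro j
      rcases hPj j with h | h
      · exact Or.inl h
      · refine Or.inr ⟨fun hs => ?_, fun hs => ?_⟩
        · exact hP12 ((pair_eq_of_subset hs hc1 (hcv j)).trans h)
        · exact hP12 ((pair_eq_of_subset hs (hcv j) hc1).symm.trans h)
    have := hgrp P₁ T₁ hc1 hPT1 hj
    have i1 : intv P₁ T₁ P₁ = 1 := by unfold intv; rw [if_pos ⟨Finset.Subset.refl _, hPT1⟩]
    have i2 : intv P₂ T₂ P₁ = 0 := by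
      unfold intv; rw [if_neg]; rintro ⟨hs, -⟩
      exact hP12 (pair_eq_of_subset hs hc2 hc1).symm
    rw [i1, i2] at this
    rw [hG₁, ← this]; ring
  have hA2 : α₂ = ∑ j ∈ G₂, β j := by
    have hj : ∀ j, Pv j = P₂ ∨ (¬ P₂ ⊆ Pv j ∧ ¬ Pv j ⊆ P₂) := by
      intro j
      rcases hPj j with h | h
      · refine Or.inr ⟨fun hs => ?_, fun hs => ?_⟩
        · exact hP12 ((pair_eq_of_subset hs hc2 (hcv j)).trans h).symm
        · exact hP12 ((pair_eq_of_subset hs (hcv j) hc2).symm.trans h).symm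
      · exact Or.inl h
    have := hgrp P₂ T₂ hc2 hPT2 hj
    have i1 : intv P₂ T₂ P₂ = 1 := by unfold intv; rw [if_pos ⟨Finset.Subset.refl _, hPT2⟩]
    have i2 : intv P₁ T₁ P₂ = 0 := by
      unfold intv; rw [if_neg]; rintro ⟨hs, -⟩
      exact hP12 (pair_eq_of_subset hs hc1 hc2)
    rw [i1, i2] at this
    rw [hG₂, ← this]; ring
  have hG₁ne : G₁.Nonempty := by
    rw [Finset.nonempty_iff_ne_empty]
    intro h
    rw [h, Finset.sum_empty] at hA1
    exact hα₁.ne' hA1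
  have hG₂ne : G₂.Nonempty := by
    rw [Finset.nonempty_iff_ne_empty]
    intro h
    rw [h, Finset.sum_empty] at hA2
    exact hα₂.ne' hA2
  -- Step 4 applications
  have hstep4_1 : ∀ j, Pv j = P₁ → Tv j \ (P₂ \ P₁) = T₁ \ (P₂ \ P₁) :=
    step4main P₁ T₁ P₂ T₂ Pv Tv α₁ α₂ hα₁ β hβ hPT1 hPTv hc1 hc2 hP12 hPj EQ hA1
  have EQ' : ∀ K, α₂ * intv P₂ T₂ K + α₁ * intv P₁ T₁ K
      = ∑ j, β j * intv (Pv j) (Tv j) K := by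
    intro K; rw [← EQ K]; ring
  have hstep4_2 : ∀ j, Pv j = P₂ → Tv j \ (P₁ \ P₂) = T₂ \ (P₁ \ P₂) :=
    step4main P₂ T₂ P₁ T₁ Pv Tv α₂ α₁ hα₂ β hβ hPT2 hPTv hc2 hc1 hP12.symm
      (fun j => (hPj j).symm) EQ' hA2
  -- Step 5 : the two pairs intersect
  have hinter : (P₁ ∩ P₂).Nonempty := by
    by_contra hdisj
    rw [Finset.not_nonempty_iff_eq_empty] at hdisj
    have hdisj' : Disjoint P₁ P₂ := Finset.disjoint_iff_inter_eq_empty.mpr hdisj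
    have hP2sd : P₂ \ P₁ = P₂ := Finset.sdiff_eq_self_of_disjoint hdisj'.symm
    have hmem : ∀ x ∈ P₂, ∀ j ∈ G₁, (x ∈ Tv j ↔ x ∈ T₁) := by
      intro x hx j hj
      obtain ⟨y, hy, hyx⟩ : ∃ y ∈ P₂, y ≠ x := by
        obtain ⟨a₂, b₂, hab₂, hP₂eq⟩ := Finset.card_eq_two.mp hc2
        rw [hP₂eq] at hx ⊢
        rcases Finset.mem_insert.mp hx with rfl | hx'
        · exact ⟨b₂, by simp, fun h => hab₂ h.symm⟩
        · rw [Finset.mem_singleton] at hx'; subst hx'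
          exact ⟨a₂, by simp, hab₂⟩
      have hyP1 : y ∉ P₁ := fun h => Finset.disjoint_left.mp hdisj' h hy
      set K := insert x P₁ with hK
      have hP1K : P₁ ⊆ K := Finset.subset_insert x P₁
      have hP2K : ¬ P₂ ⊆ K := by
        intro hs
        rcases Finset.mem_insert.mp (hs hy) with h | h
        · exact hyx h
        · exact hyP1 h
      have h := EQ K
      have i1 : intv P₁ T₁ K = if x ∈ T₁ then 1 else 0 := by
        unfold intv
        have hiff : K ⊆ T₁ ↔ x ∈ T₁ := by
          rw [hK, Finset.insert_subset_iff]
          exact ⟨fun h => h.1, fun h => ⟨h, hPT1⟩⟩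
        simp [hP1K, hiff]
      have i2 : intv P₂ T₂ K = 0 := by
        unfold intv; rw [if_neg]; rintro ⟨hs, -⟩; exact hP2K hs
      have keyj : ∀ j', β j' * intv (Pv j') (Tv j') K
          = if j' ∈ G₁ then β j' * (if x ∈ Tv j' then 1 else 0) else 0 := by
        intro j'
        rcases hPj j' with hh | hh
        · have hjG : j' ∈ G₁ := by rw [hG₁]; simp [hh]
          rw [if_pos hjG]
          unfold intv
          have hiff : K ⊆ Tv j' ↔ x ∈ Tv j' := by
            rw [hK, Finset.insert_subset_iff]
            exact ⟨fun h => h.1, fun h => ⟨h, hh ▸ hPTv j'⟩⟩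
          simp [hP1K, hiff, hh]
        · have hjG : j' ∉ G₁ := by
            rw [hG₁]; simp only [Finset.mem_filter, Finset.mem_univ, true_and]
            intro hP; exact hP12 (hP.symm.trans hh)
          rw [if_neg hjG]
          unfold intv
          rw [if_neg, mul_zero]
          rintro ⟨hs, -⟩
          exact hP2K (hh ▸ hs)
      rw [i1, i2, mul_zero, add_zero,
        Finset.sum_congr rfl fun j' _ => keyj j', Finset.sum_ite_mem,
        Finset.univ_inter] at h
      by_cases hxT : x ∈ T₁
      · rw [if_pos hxT, mul_one, hA1] at h
        exact iff_of_true (forall_of_sum_ite G₁ β hβ _ h.symm j hj) hxT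
      · rw [if_neg hxT, mul_zero] at h
        exact iff_of_false (forall_not_of_sum_ite G₁ β hβ _ h.symm j hj) hxT
    obtain ⟨j, hj⟩ := hG₁ne
    have hPvj : Pv j = P₁ := (Finset.mem_filter.mp hj).2
    have hTT : Tv j = T₁ := by
      have h4 := hstep4_1 j hPvj
      rw [hP2sd] at h4
      ext z
      by_cases hz : z ∈ P₂
      · exact hmem z hz j hj
      · constructor
        · intro hzT
          have : z ∈ Tv j \ P₂ := Finset.mem_sdiff.mpr ⟨hzT, hz⟩
          rw [h4] at this; exact (Finset.mem_sdiff.mp this).1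
        · intro hzT
          have : z ∈ T₁ \ P₂ := Finset.mem_sdiff.mpr ⟨hzT, hz⟩
          rw [← h4] at this; exact (Finset.mem_sdiff.mp this).1
    exact hnej1 j ⟨hPvj, hTT⟩
  -- extract a, b₁, b₂
  have hcard1 : (P₁ ∩ P₂).card = 1 := by
    have hle : (P₁ ∩ P₂).card ≤ 2 := le_trans (Finset.card_le_card Finset.inter_subset_left) hc1.le
    have hge : 1 ≤ (P₁ ∩ P₂).card := Finset.Nonempty.card_pos hinter
    have hne2 : (P₁ ∩ P₂).card ≠ 2 := by
      intro h2
      have e1 : P₁ ∩ P₂ = P₁ :=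
        Finset.eq_of_subset_of_card_le Finset.inter_subset_left (by omega)
      have e2 : P₁ ∩ P₂ = P₂ :=
        Finset.eq_of_subset_of_card_le Finset.inter_subset_right (by omega)
      exact hP12 (e1.symm.trans e2)
    omega
  obtain ⟨a, hainter⟩ := Finset.card_eq_one.mp hcard1
  have haP1 : a ∈ P₁ := Finset.inter_subset_left (hainter ▸ Finset.mem_singleton_self a)
  have haP2 : a ∈ P₂ := Finset.inter_subset_right (hainter ▸ Finset.mem_singleton_self a)
  obtain ⟨b₁, hab₁, hP₁eq⟩ : ∃ b₁, a ≠ b₁ ∧ P₁ = {a, b₁} := by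
    obtain ⟨x, y, hxy, hxyeq⟩ := Finset.card_eq_two.mp hc1
    rw [hxyeq] at haP1
    rcases Finset.mem_insert.mp haP1 with rfl | h
    · exact ⟨y, hxy, hxyeq⟩
    · rw [Finset.mem_singleton] at h; subst h
      exact ⟨x, fun h => hxy h.symm, hxyeq.trans (Finset.pair_comm x a)⟩
  obtain ⟨b₂, hab₂, hP₂eq⟩ : ∃ b₂, a ≠ b₂ ∧ P₂ = {a, b₂} := by
    obtain ⟨x, y, hxy, hxyeq⟩ := Finset.card_eq_two.mp hc2
    rw [hxyeq] at haP2
    rcases Finset.mem_insert.mp haP2 with rfl | h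
    · exact ⟨y, hxy, hxyeq⟩
    · rw [Finset.mem_singleton] at h; subst h
      exact ⟨x, fun h => hxy h.symm, hxyeq.trans (Finset.pair_comm x a)⟩
  have hb₁P2 : b₁ ∉ P₂ := by
    intro h
    have : b₁ ∈ P₁ ∩ P₂ := Finset.mem_inter.mpr ⟨by rw [hP₁eq]; simp, h⟩
    rw [hainter, Finset.mem_singleton] at this
    exact hab₁ this.symm
  have hb₂P1 : b₂ ∉ P₁ := by
    intro h
    have : b₂ ∈ P₁ ∩ P₂ := Finset.mem_inter.mpr ⟨h, by rw [hP₂eq]; simp⟩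
    rw [hainter, Finset.mem_singleton] at this
    exact hab₂ this.symm
  have hb₁b₂ : b₁ ≠ b₂ := by
    intro h
    subst h
    exact hb₁P2 (by rw [hP₂eq]; simp)
  have hsd21 : P₂ \ P₁ = {b₂} := by
    ext z
    rw [Finset.mem_sdiff, hP₂eq, hP₁eq]
    simp only [Finset.mem_insert, Finset.mem_singleton]
    constructor
    · rintro ⟨rfl | rfl, h2⟩
      · exact absurd (Or.inl rfl) h2
      · rfl
    · rintro rfl
      refine ⟨Or.inr rfl, ?_⟩
      rintro (rfl | rfl)
      · exact hab₂ rfl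
      · exact hb₁b₂ rfl
  have hsd12 : P₁ \ P₂ = {b₁} := by
    ext z
    rw [Finset.mem_sdiff, hP₁eq, hP₂eq]
    simp only [Finset.mem_insert, Finset.mem_singleton]
    constructor
    · rintro ⟨rfl | rfl, h2⟩
      · exact absurd (Or.inl rfl) h2
      · rfl
    · rintro rfl
      refine ⟨Or.inr rfl, ?_⟩
      rintro (rfl | rfl)
      · exact hab₁ rfl
      · exact hb₁b₂ rfl
  -- G₁, G₂ are singletons
  have hTvG₁ : ∀ j ∈ G₁, Tv j = (if b₂ ∈ T₁ then T₁.erase b₂ else insert b₂ T₁) := by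
    intro j hj
    have hPvj : Pv j = P₁ := (Finset.mem_filter.mp hj).2
    have h4 := hstep4_1 j hPvj
    rw [hsd21] at h4
    have hneT : Tv j ≠ T₁ := fun h => hnej1 j ⟨hPvj, h⟩
    have hcase := sdiff_singleton_cases h4 hneT
    by_cases hb : b₂ ∈ T₁
    · rw [if_pos hb]; exact (hcase.1 hb).2
    · rw [if_neg hb]; exact (hcase.2 hb).2
  have hTvG₂ : ∀ j ∈ G₂, Tv j = (if b₁ ∈ T₂ then T₂.erase b₁ else insert b₁ T₂) := by
    intro j hj
    have hPvj : Pv j = P₂ := (Finset.mem_filter.mp hj).2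
    have h4 := hstep4_2 j hPvj
    rw [hsd12] at h4
    have hneT : Tv j ≠ T₂ := fun h => hnej2 j ⟨hPvj, h⟩
    have hcase := sdiff_singleton_cases h4 hneT
    by_cases hb : b₁ ∈ T₂
    · rw [if_pos hb]; exact (hcase.1 hb).2
    · rw [if_neg hb]; exact (hcase.2 hb).2
  obtain ⟨j₁, hj₁⟩ := hG₁ne
  obtain ⟨j₂, hj₂⟩ := hG₂ne
  have hPvj₁ : Pv j₁ = P₁ := (Finset.mem_filter.mp hj₁).2
  have hPvj₂ : Pv j₂ = P₂ := (Finset.mem_filter.mp hj₂).2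
  have hG₁eq : G₁ = {j₁} := by
    refine Finset.eq_singleton_iff_unique_mem.mpr ⟨hj₁, fun j hj => ?_⟩
    by_contra hnejq
    exact hnejj j j₁ hnejq ⟨by rw [(Finset.mem_filter.mp hj).2, hPvj₁],
      by rw [hTvG₁ j hj, hTvG₁ j₁ hj₁]⟩
  have hG₂eq : G₂ = {j₂} := by
    refine Finset.eq_singleton_iff_unique_mem.mpr ⟨hj₂, fun j hj => ?_⟩
    by_contra hnejq
    exact hnejj j j₂ hnejq ⟨by rw [(Finset.mem_filter.mp hj).2, hPvj₂],
      by rw [hTvG₂ j hj, hTvG₂ j₂ hj₂]⟩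
  have hj₁₂ : j₁ ≠ j₂ := by
    intro h; rw [h, hPvj₂] at hPvj₁; exact hP12 hPvj₁.symm
  have hbj1 : β j₁ = α₁ := by rw [hA1, hG₁eq, Finset.sum_singleton]
  have hbj2 : β j₂ = α₂ := by rw [hA2, hG₂eq, Finset.sum_singleton]
  have huniv : (Finset.univ : Finset (Fin m)) = {j₁, j₂} := by
    ext j
    simp only [Finset.mem_univ, true_iff, Finset.mem_insert, Finset.mem_singleton]
    rcases hPj j with h | h
    · left
      have hjm : j ∈ G₁ := by rw [hG₁]; simp [h]
      rw [hG₁eq, Finset.mem_singleton] at hjm; exact hjm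
    · right
      have hjm : j ∈ G₂ := by rw [hG₂]; simp [h]
      rw [hG₂eq, Finset.mem_singleton] at hjm; exact hjm
  have hm2 : m = 2 := by
    have h1 : Fintype.card (Fin m) = m := Fintype.card_fin m
    rw [← h1, ← Finset.card_univ, huniv, Finset.card_pair hj₁₂]
  have hjall : ∀ j : Fin m, j = j₁ ∨ j = j₂ := by
    intro j
    have := huniv ▸ Finset.mem_univ j
    simpa using this
  have hsum2 : ∀ f : Fin m → ℝ, ∑ j, f j = f j₁ + f j₂ := by
    intro f; rw [huniv, Finset.sum_pair hj₁₂]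
  -- memberships
  have hb₁P1 : b₁ ∈ P₁ := by rw [hP₁eq]; simp
  have hb₂P2 : b₂ ∈ P₂ := by rw [hP₂eq]; simp
  have haT1 : a ∈ T₁ := hPT1 haP1
  have hb₁T1 : b₁ ∈ T₁ := hPT1 hb₁P1
  have haT2 : a ∈ T₂ := hPT2 haP2
  have hb₂T2 : b₂ ∈ T₂ := hPT2 hb₂P2
  -- the pivotal evaluation at K = insert b₂ P₁
  set Kh := insert b₂ P₁ with hKh
  have hP1Kh : P₁ ⊆ Kh := Finset.subset_insert _ _
  have hP2Kh : P₂ ⊆ Kh := by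
    rw [hP₂eq, hKh]
    intro z hz
    rcases Finset.mem_insert.mp hz with rfl | hz
    · exact Finset.mem_insert_of_mem haP1
    · rw [Finset.mem_singleton] at hz; subst hz; exact Finset.mem_insert_self _ _
  have hb₂Kh : b₂ ∈ Kh := Finset.mem_insert_self _ _
  have hb₁Kh : b₁ ∈ Kh := Finset.mem_insert_of_mem hb₁P1
  have i1 : intv P₁ T₁ Kh = if b₂ ∈ T₁ then 1 else 0 := by
    unfold intv
    have hiff : Kh ⊆ T₁ ↔ b₂ ∈ T₁ := by
      rw [hKh, Finset.insert_subset_iff]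
      exact ⟨fun h => h.1, fun h => ⟨h, hPT1⟩⟩
    simp [hP1Kh, hiff]
  have i2 : intv P₂ T₂ Kh = if b₁ ∈ T₂ then 1 else 0 := by
    unfold intv
    have hiff : Kh ⊆ T₂ ↔ b₁ ∈ T₂ := by
      constructor
      · intro h; exact h hb₁Kh
      · intro h
        rw [hKh, Finset.insert_subset_iff, hP₁eq, Finset.insert_subset_iff,
          Finset.singleton_subset_iff]
        exact ⟨hb₂T2, haT2, h⟩
    simp [hP2Kh, hiff]
  have ij₁ : intv (Pv j₁) (Tv j₁) Kh = if b₂ ∈ T₁ then 0 else 1 := by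
    unfold intv
    have hTv1 := hTvG₁ j₁ hj₁
    by_cases hb : b₂ ∈ T₁
    · rw [if_pos hb] at hTv1
      rw [if_pos hb, if_neg]
      rintro ⟨-, hs⟩
      exact (Finset.notMem_erase b₂ T₁) (hTv1 ▸ hs hb₂Kh)
    · rw [if_neg hb] at hTv1
      rw [if_neg hb, if_pos]
      refine ⟨by rw [hPvj₁]; exact hP1Kh, ?_⟩
      rw [hTv1, hKh]
      exact Finset.insert_subset_insert _ hPT1
  have ij₂ : intv (Pv j₂) (Tv j₂) Kh = if b₁ ∈ T₂ then 0 else 1 := by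
    unfold intv
    have hTv2 := hTvG₂ j₂ hj₂
    by_cases hb : b₁ ∈ T₂
    · rw [if_pos hb] at hTv2
      rw [if_pos hb, if_neg]
      rintro ⟨-, hs⟩
      exact (Finset.notMem_erase b₁ T₂) (hTv2 ▸ hs hb₁Kh)
    · rw [if_neg hb] at hTv2
      rw [if_neg hb, if_pos]
      refine ⟨by rw [hPvj₂]; exact hP2Kh, ?_⟩
      rw [hTv2, hKh]
      intro z hz
      rcases Finset.mem_insert.mp hz with rfl | hz
      · exact Finset.mem_insert_of_mem hb₂T2
      · rw [hP₁eq] at hz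
        rcases Finset.mem_insert.mp hz with rfl | hz
        · exact Finset.mem_insert_of_mem haT2
        · rw [Finset.mem_singleton] at hz; subst hz; exact Finset.mem_insert_self _ _
  have hKheq := EQ Kh
  rw [hsum2 (fun j => β j * intv (Pv j) (Tv j) Kh)] at hKheq
  rw [i1, i2, ij₁, ij₂, hbj1, hbj2] at hKheq
  by_cases hx : b₂ ∈ T₁ <;> by_cases hy : b₁ ∈ T₂
  · -- impossible : α₁ + α₂ = 0
    rw [if_pos hx, if_pos hy, if_pos hx, if_pos hy] at hKheq
    exfalso; linarith
  · -- Case Y : b₂ ∈ T₁, b₁ ∉ T₂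
    rw [if_pos hx, if_neg hy, if_pos hx, if_neg hy] at hKheq
    have hEq12 : α₁ = α₂ := by linarith
    have hTvj₁ : Tv j₁ = T₁.erase b₂ := by rw [hTvG₁ j₁ hj₁, if_pos hx]
    have hTvj₂ : Tv j₂ = insert b₁ T₂ := by rw [hTvG₂ j₂ hj₂, if_neg hy]
    have hP2T1 : P₂ ⊆ T₁ := by
      rw [hP₂eq, Finset.insert_subset_iff, Finset.singleton_subset_iff]
      exact ⟨haT1, hx⟩
    have hsub1 : T₁ ⊆ insert b₁ T₂ := by
      have h := EQ T₁
      rw [hsum2 (fun j => β j * intv (Pv j) (Tv j) T₁)] at h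
      have e1 : intv P₁ T₁ T₁ = 1 := by
        unfold intv; rw [if_pos ⟨hPT1, Finset.Subset.refl _⟩]
      have e2 : intv P₂ T₂ T₁ = 0 := by
        unfold intv; rw [if_neg]; rintro ⟨-, hs⟩; exact hy (hs hb₁T1)
      have e3 : intv (Pv j₁) (Tv j₁) T₁ = 0 := by
        unfold intv; rw [if_neg]; rintro ⟨-, hs⟩
        exact (Finset.notMem_erase b₂ T₁) (hTvj₁ ▸ hs hx)
      have e4 : intv (Pv j₂) (Tv j₂) T₁ = if T₁ ⊆ insert b₁ T₂ then 1 else 0 := by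
        unfold intv
        rw [hPvj₂, hTvj₂]
        simp [hP2T1]
      rw [e1, e2, e3, e4, hbj1, hbj2] at h
      by_contra hns
      rw [if_neg hns] at h
      linarith
    have hsub2 : insert b₁ T₂ ⊆ T₁ := by
      have h := EQ (insert b₁ T₂)
      rw [hsum2 (fun j => β j * intv (Pv j) (Tv j) (insert b₁ T₂))] at h
      have hP1K : P₁ ⊆ insert b₁ T₂ := by
        rw [hP₁eq, Finset.insert_subset_iff, Finset.singleton_subset_iff]
        exact ⟨Finset.mem_insert_of_mem haT2, Finset.mem_insert_self _ _⟩
      have hP2K : P₂ ⊆ insert b₁ T₂ := hPT2.trans (Finset.subset_insert _ _)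
      have e1 : intv P₁ T₁ (insert b₁ T₂) = if insert b₁ T₂ ⊆ T₁ then 1 else 0 := by
        unfold intv; simp [hP1K]
      have e2 : intv P₂ T₂ (insert b₁ T₂) = 0 := by
        unfold intv; rw [if_neg]; rintro ⟨-, hs⟩
        exact hy (hs (Finset.mem_insert_self _ _))
      have e3 : intv (Pv j₁) (Tv j₁) (insert b₁ T₂) = 0 := by
        unfold intv; rw [if_neg]; rintro ⟨-, hs⟩
        exact (Finset.notMem_erase b₂ T₁)
          (hTvj₁ ▸ hs (Finset.mem_insert_of_mem hb₂T2))
      have e4 : intv (Pv j₂) (Tv j₂) (insert b₁ T₂) = 1 := by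
        unfold intv
        rw [hPvj₂, hTvj₂, if_pos ⟨hP2K, Finset.Subset.refl _⟩]
      rw [e1, e2, e3, e4, hbj1, hbj2] at h
      by_contra hns
      rw [if_neg hns] at h
      linarith
    have hT₁eqY : T₁ = insert b₁ T₂ := Finset.Subset.antisymm hsub1 hsub2
    set C := T₂ \ P₂ with hC
    clear_value C
    have hC_a : a ∉ C := fun h => (Finset.mem_sdiff.mp (hC ▸ h)).2 haP2
    have hC_b₂ : b₂ ∉ C := fun h => (Finset.mem_sdiff.mp (hC ▸ h)).2 hb₂P2
    have hC_b₁ : b₁ ∉ C := fun h => hy (Finset.mem_sdiff.mp (hC ▸ h)).1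
    have hT₂mem : ∀ z, z ∈ T₂ ↔ (z = a ∨ z = b₂ ∨ z ∈ C) := by
      intro z
      constructor
      · intro hz
        by_cases h1 : z = a
        · exact Or.inl h1
        by_cases h2 : z = b₂
        · exact Or.inr (Or.inl h2)
        refine Or.inr (Or.inr ?_)
        rw [hC, Finset.mem_sdiff, hP₂eq]
        simp only [Finset.mem_insert, Finset.mem_singleton]
        exact ⟨hz, by tauto⟩
      · rintro (rfl | rfl | hz)
        · exact haT2
        · exact hb₂T2
        · exact (Finset.mem_sdiff.mp (hC ▸ hz)).1
    have hT₂eq2 : T₂ = insert a (insert b₂ C) := by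
      ext z
      rw [hT₂mem z]
      simp [Finset.mem_insert]
    have f2 : elemImset t₂ = semiElemImset {a} {b₂} C := by
      apply elem_eq_semi t₂ a b₂ C
      · rw [← hP₂def]; exact hP₂eq
      · rw [← hT₂def]; exact hT₂eq2
      · exact hab₂
      · exact hC_a
      · exact hC_b₂
    have f1 : elemImset t₁ = semiElemImset {a} {b₁} (insert b₂ C) := by
      apply elem_eq_semi t₁ a b₁ (insert b₂ C)
      · rw [← hP₁def]; exact hP₁eq
      · rw [← hT₁def, hT₁eqY, hT₂eq2]
        ext z
        simp only [Finset.mem_insert]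
        tauto
      · exact hab₁
      · simp only [Finset.mem_insert]
        rintro (h | h)
        · exact hab₂ h
        · exact hC_a h
      · simp only [Finset.mem_insert]
        rintro (h | h)
        · exact hb₁b₂ h
        · exact hC_b₁ h
    have f3 : elemImset (v j₁) = semiElemImset {a} {b₁} C := by
      apply elem_eq_semi (v j₁) a b₁ C
      · rw [hPvdef' j₁, hPvj₁]; exact hP₁eq
      · rw [hTvdef' j₁, hTvj₁, hT₁eqY, hT₂eq2]
        ext z
        simp only [Finset.mem_erase, Finset.mem_insert]
        constructor
        · rintro ⟨hzb₂, rfl | rfl | rfl | hz⟩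
          · exact Or.inr (Or.inl rfl)
          · exact Or.inl rfl
          · exact absurd rfl hzb₂
          · exact Or.inr (Or.inr hz)
        · rintro (rfl | rfl | hz)
          · exact ⟨fun h => hab₂ h, Or.inr (Or.inl rfl)⟩
          · exact ⟨fun h => hb₁b₂ h, Or.inl rfl⟩
          · exact ⟨fun h => hC_b₂ (h ▸ hz), Or.inr (Or.inr (Or.inr hz))⟩
      · exact hab₁
      · exact hC_a
      · exact hC_b₁
    have f4 : elemImset (v j₂) = semiElemImset {a} {b₂} (insert b₁ C) := by
      apply elem_eq_semi (v j₂) a b₂ (insert b₁ C)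
      · rw [hPvdef' j₂, hPvj₂]; exact hP₂eq
      · rw [hTvdef' j₂, hTvj₂, hT₂eq2]
        ext z
        simp only [Finset.mem_insert]
        tauto
      · exact hab₂
      · simp only [Finset.mem_insert]
        rintro (h | h)
        · exact hab₁ h
        · exact hC_a h
      · simp only [Finset.mem_insert]
        rintro (h | h)
        · exact hb₁b₂ h.symm
        · exact hC_b₂ h
    refine ⟨hm2, hEq12, ?_, a, b₂, b₁, C, hab₂, hab₁, fun h => hb₁b₂ h.symm,
      hC_a, hC_b₂, hC_b₁, ?_, ?_⟩
    · intro j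
      rcases hjall j with rfl | rfl
      · exact hbj1
      · rw [hbj2, hEq12]
    · rw [f1, f2]
      exact Set.pair_comm _ _
    · ext x
      simp only [Set.mem_range, Set.mem_insert_iff, Set.mem_singleton_iff]
      constructor
      · rintro ⟨j, rfl⟩
        rcases hjall j with rfl | rfl
        · exact Or.inl f3
        · exact Or.inr f4
      · rintro (rfl | rfl)
        · exact ⟨j₁, f3⟩
        · exact ⟨j₂, f4⟩
  · -- Case X : b₂ ∉ T₁, b₁ ∈ T₂
    rw [if_neg hx, if_pos hy, if_neg hx, if_pos hy] at hKheq
    have hEq12 : α₁ = α₂ := by linarith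
    have hTvj₁ : Tv j₁ = insert b₂ T₁ := by rw [hTvG₁ j₁ hj₁, if_neg hx]
    have hTvj₂ : Tv j₂ = T₂.erase b₁ := by rw [hTvG₂ j₂ hj₂, if_pos hy]
    have hP1T2 : P₁ ⊆ T₂ := by
      rw [hP₁eq, Finset.insert_subset_iff, Finset.singleton_subset_iff]
      exact ⟨haT2, hy⟩
    have hsub1 : T₂ ⊆ insert b₂ T₁ := by
      have h := EQ T₂
      rw [hsum2 (fun j => β j * intv (Pv j) (Tv j) T₂)] at h
      have e1 : intv P₁ T₁ T₂ = 0 := by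
        unfold intv; rw [if_neg]; rintro ⟨-, hs⟩; exact hx (hs hb₂T2)
      have e2 : intv P₂ T₂ T₂ = 1 := by
        unfold intv; rw [if_pos ⟨hPT2, Finset.Subset.refl _⟩]
      have e4 : intv (Pv j₂) (Tv j₂) T₂ = 0 := by
        unfold intv; rw [if_neg]; rintro ⟨-, hs⟩
        exact (Finset.notMem_erase b₁ T₂) (hTvj₂ ▸ hs hy)
      have e3 : intv (Pv j₁) (Tv j₁) T₂ = if T₂ ⊆ insert b₂ T₁ then 1 else 0 := by
        unfold intv
        rw [hPvj₁, hTvj₁]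
        simp [hP1T2]
      rw [e1, e2, e3, e4, hbj1, hbj2] at h
      by_contra hns
      rw [if_neg hns] at h
      linarith
    have hsub2 : insert b₂ T₁ ⊆ T₂ := by
      have h := EQ (insert b₂ T₁)
      rw [hsum2 (fun j => β j * intv (Pv j) (Tv j) (insert b₂ T₁))] at h
      have hP1K : P₁ ⊆ insert b₂ T₁ := hPT1.trans (Finset.subset_insert _ _)
      have hP2K : P₂ ⊆ insert b₂ T₁ := by
        rw [hP₂eq, Finset.insert_subset_iff, Finset.singleton_subset_iff]
        exact ⟨Finset.mem_insert_of_mem haT1, Finset.mem_insert_self _ _⟩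
      have e1 : intv P₁ T₁ (insert b₂ T₁) = 0 := by
        unfold intv; rw [if_neg]; rintro ⟨-, hs⟩
        exact hx (hs (Finset.mem_insert_self _ _))
      have e2 : intv P₂ T₂ (insert b₂ T₁) = if insert b₂ T₁ ⊆ T₂ then 1 else 0 := by
        unfold intv; simp [hP2K]
      have e3 : intv (Pv j₁) (Tv j₁) (insert b₂ T₁) = 1 := by
        unfold intv
        rw [hPvj₁, hTvj₁, if_pos ⟨hP1K, Finset.Subset.refl _⟩]
      have e4 : intv (Pv j₂) (Tv j₂) (insert b₂ T₁) = 0 := by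
        unfold intv; rw [if_neg]; rintro ⟨-, hs⟩
        exact (Finset.notMem_erase b₁ T₂)
          (hTvj₂ ▸ hs (Finset.mem_insert_of_mem hb₁T1))
      rw [e1, e2, e3, e4, hbj1, hbj2] at h
      by_contra hns
      rw [if_neg hns] at h
      linarith
    have hT₂eq : T₂ = insert b₂ T₁ := Finset.Subset.antisymm hsub1 hsub2
    set C := T₁ \ P₁ with hC
    clear_value C
    have hC_a : a ∉ C := fun h => (Finset.mem_sdiff.mp (hC ▸ h)).2 haP1
    have hC_b₁ : b₁ ∉ C := fun h => (Finset.mem_sdiff.mp (hC ▸ h)).2 hb₁P1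
    have hC_b₂ : b₂ ∉ C := fun h => hx (Finset.mem_sdiff.mp (hC ▸ h)).1
    have hT₁mem : ∀ z, z ∈ T₁ ↔ (z = a ∨ z = b₁ ∨ z ∈ C) := by
      intro z
      constructor
      · intro hz
        by_cases h1 : z = a
        · exact Or.inl h1
        by_cases h2 : z = b₁
        · exact Or.inr (Or.inl h2)
        refine Or.inr (Or.inr ?_)
        rw [hC, Finset.mem_sdiff, hP₁eq]
        simp only [Finset.mem_insert, Finset.mem_singleton]
        exact ⟨hz, by tauto⟩
      · rintro (rfl | rfl | hz)
        · exact haT1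
        · exact hb₁T1
        · exact (Finset.mem_sdiff.mp (hC ▸ hz)).1
    have hT₁eq2 : T₁ = insert a (insert b₁ C) := by
      ext z
      rw [hT₁mem z]
      simp [Finset.mem_insert]
    have e1 : elemImset t₁ = semiElemImset {a} {b₁} C := by
      apply elem_eq_semi t₁ a b₁ C
      · rw [← hP₁def]; exact hP₁eq
      · rw [← hT₁def]; exact hT₁eq2
      · exact hab₁
      · exact hC_a
      · exact hC_b₁
    have e2 : elemImset t₂ = semiElemImset {a} {b₂} (insert b₁ C) := by
      apply elem_eq_semi t₂ a b₂ (insert b₁ C)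
      · rw [← hP₂def]; exact hP₂eq
      · rw [← hT₂def, hT₂eq, hT₁eq2]
        ext z
        simp only [Finset.mem_insert]
        tauto
      · exact hab₂
      · simp only [Finset.mem_insert]
        rintro (h | h)
        · exact hab₁ h
        · exact hC_a h
      · simp only [Finset.mem_insert]
        rintro (h | h)
        · exact hb₁b₂ h.symm
        · exact hC_b₂ h
    have e3 : elemImset (v j₁) = semiElemImset {a} {b₁} (insert b₂ C) := by
      apply elem_eq_semi (v j₁) a b₁ (insert b₂ C)
      · rw [hPvdef' j₁, hPvj₁]; exact hP₁eq
      · rw [hTvdef' j₁, hTvj₁, hT₁eq2]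
        ext z
        simp only [Finset.mem_insert]
        tauto
      · exact hab₁
      · simp only [Finset.mem_insert]
        rintro (h | h)
        · exact hab₂ h
        · exact hC_a h
      · simp only [Finset.mem_insert]
        rintro (h | h)
        · exact hb₁b₂ h
        · exact hC_b₁ h
    have e4 : elemImset (v j₂) = semiElemImset {a} {b₂} C := by
      apply elem_eq_semi (v j₂) a b₂ C
      · rw [hPvdef' j₂, hPvj₂]; exact hP₂eq
      · rw [hTvdef' j₂, hTvj₂, hT₂eq, hT₁eq2]
        ext z
        simp only [Finset.mem_erase, Finset.mem_insert]
        constructor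
        · rintro ⟨hzb₁, rfl | rfl | rfl | hz⟩
          · exact Or.inr (Or.inl rfl)
          · exact Or.inl rfl
          · exact absurd rfl hzb₁
          · exact Or.inr (Or.inr hz)
        · rintro (rfl | rfl | hz)
          · exact ⟨fun h => hab₁ h, Or.inr (Or.inl rfl)⟩
          · exact ⟨fun h => hb₁b₂ h.symm, Or.inl rfl⟩
          · exact ⟨fun h => hC_b₁ (h ▸ hz), Or.inr (Or.inr (Or.inr hz))⟩
      · exact hab₂
      · exact hC_a
      · exact hC_b₂
    refine ⟨hm2, hEq12, ?_, a, b₁, b₂, C, hab₁, hab₂, hb₁b₂, hC_a, hC_b₁, hC_b₂, ?_, ?_⟩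
    · intro j
      rcases hjall j with rfl | rfl
      · exact hbj1
      · rw [hbj2, hEq12]
    · rw [e1, e2]
    · ext x
      simp only [Set.mem_range, Set.mem_insert_iff, Set.mem_singleton_iff]
      constructor
      · rintro ⟨j, rfl⟩
        rcases hjall j with rfl | rfl
        · exact Or.inr e3
        · exact Or.inl e4
      · rintro (rfl | rfl)
        · exact ⟨j₂, e4⟩
        · exact ⟨j₁, e3⟩
  · -- impossible : 0 = α₁ + α₂
    rw [if_neg hx, if_neg hy, if_neg hx, if_neg hy] at hKheq
    exfalso; linarith
end
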